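/- For all n ≥ 4, F_n = F(A_{n+1}, f_n), i.e., the set of length-f_n factors appearing in any A_m (for any m) equals the set of length-f_n factors of words in A_{n+1}. -/

import Mathlib

/-- Sets of inflated random Fibonacci words: A₁ = {0}, A₂ = {1},
    Aₙ = Aₙ₋₁Aₙ₋₂ ∪ Aₙ₋₂Aₙ₋₁ for n ≥ 3 (A₀ = ∅). -/
def wordSet : ℕ → Set (List Bool)
  | 0 => ∅
  | 1 => {[false]}
  | 2 => {[true]}
  | (n + 3) => Set.image2 (· ++ ·) (wordSet (n + 2)) (wordSet (n + 1)) ∪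
      Set.image2 (· ++ ·) (wordSet (n + 1)) (wordSet (n + 2))

/-- Concatenation of sets of words: UV = {uv : u ∈ U, v ∈ V}. -/
def cat (U V : Set (List Bool)) : Set (List Bool) := Set.image2 (· ++ ·) U V

/-- W[a,b]: the set of segments wₐ…w_b (1-based indexing) of words in W. -/
def seg (W : Set (List Bool)) (a b : ℕ) : Set (List Bool) :=
  (fun w => (w.drop (a - 1)).take (b - a + 1)) '' W

/-- F(S, m): the set of all contiguous factors of length m of words in S. -/
def factorSet (S : Set (List Bool)) (m : ℕ) : Set (List Bool) :=
  {x | x.length = m ∧ ∃ w ∈ S, x <:+: w}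

/-- Fₙ: the set of factors of length fₙ occurring in any inflated word. -/
def Fn (n : ℕ) : Set (List Bool) := ⋃ m ≥ 1, factorSet (wordSet m) (Nat.fib n)

/-!
A word of `A m` with `m ≥ 3` is a concatenation of a word of `A (m - 1)` and one of `A (m - 2)`
(in either order), so a factor of length `f n` of a word of `A m`, `m ≥ n + 2`, either lies in
one of the two blocks, and induction applies, or straddles their junction. A suffix shorter than
`f k` of a word of `A m`, `k ≤ m`, is already a suffix of a word of `A k`; since every `A m` is
closed under reversal, the same holds for prefixes. Writing `f n = f (n - 2) + f (n - 1)`, one of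
the two parts of a straddling factor is shorter than `f (n - 1)`: moving that part into a word of
`A (n - 1)` and the other into a word of `A n` exhibits the factor in `A n A (n - 1)` or
`A (n - 1) A n`, both contained in `A (n + 1)`.
-/

open List

lemma append_mem_wordSet_left {m : ℕ} {u v : List Bool} (hu : u ∈ wordSet (m + 2))
    (hv : v ∈ wordSet (m + 1)) : u ++ v ∈ wordSet (m + 3) :=
  Or.inl (Set.mem_image2_of_mem hu hv)

lemma append_mem_wordSet_right {m : ℕ} {u v : List Bool} (hu : u ∈ wordSet (m + 1))
    (hv : v ∈ wordSet (m + 2)) : u ++ v ∈ wordSet (m + 3) :=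
  Or.inr (Set.mem_image2_of_mem hu hv)

theorem length_of_mem_wordSet : ∀ {m : ℕ} {w : List Bool}, w ∈ wordSet m → w.length = Nat.fib m
  | 1, _, rfl => rfl
  | 2, _, rfl => rfl
  | m + 3, _, Or.inl ⟨u, hu, v, hv, rfl⟩ => by
    rw [length_append, length_of_mem_wordSet hu, length_of_mem_wordSet hv,
      Nat.fib_add_two (n := m + 1), add_comm]
  | m + 3, _, Or.inr ⟨u, hu, v, hv, rfl⟩ => by
    rw [length_append, length_of_mem_wordSet hu, length_of_mem_wordSet hv,
      Nat.fib_add_two (n := m + 1)]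

theorem wordSet_nonempty : ∀ {m : ℕ}, 1 ≤ m → (wordSet m).Nonempty
  | 1, _ => ⟨_, rfl⟩
  | 2, _ => ⟨_, rfl⟩
  | m + 3, _ =>
    let ⟨u, hu⟩ := wordSet_nonempty (m := m + 2) (by omega)
    let ⟨v, hv⟩ := wordSet_nonempty (m := m + 1) (by omega)
    ⟨u ++ v, append_mem_wordSet_left hu hv⟩

theorem reverse_mem_wordSet : ∀ {m : ℕ} {w : List Bool}, w ∈ wordSet m → w.reverse ∈ wordSet m
  | 1, _, rfl => rfl
  | 2, _, rfl => rfl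
  | _ + 3, _, Or.inl ⟨_, hu, _, hv, rfl⟩ => by
    rw [reverse_append]
    exact append_mem_wordSet_right (reverse_mem_wordSet hv) (reverse_mem_wordSet hu)
  | _ + 3, _, Or.inr ⟨_, hu, _, hv, rfl⟩ => by
    rw [reverse_append]
    exact append_mem_wordSet_left (reverse_mem_wordSet hv) (reverse_mem_wordSet hu)

theorem suffix_or_eq_append_of_suffix_append {α : Type*} {s u v : List α} (h : s <:+ u ++ v) :
    s <:+ v ∨ ∃ s', s' <:+ u ∧ s = s' ++ v := by
  obtain ⟨a, ha⟩ := h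
  rcases append_eq_append_iff.mp ha with ⟨a', rfl, rfl⟩ | ⟨c', rfl, rfl⟩
  · exact Or.inr ⟨a', ⟨a, rfl⟩, rfl⟩
  · exact Or.inl ⟨c', rfl⟩

theorem exists_suffix_mem_wordSet_of_succ :
    ∀ (m : ℕ) {s w : List Bool}, w ∈ wordSet (m + 1) → s <:+ w → s.length < Nat.fib m →
      ∃ w₀ ∈ wordSet m, s <:+ w₀
  | 1, _, _, _, _, hlen => ⟨_, rfl, by simp_all⟩
  | 2, _, _, _, _, hlen => ⟨_, rfl, by simp_all⟩
  | m + 3, s, _, Or.inl ⟨u, hu, v, hv, rfl⟩, hs, hlen => by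
    rcases suffix_or_eq_append_of_suffix_append hs with hsv | ⟨s', hs'u, rfl⟩
    · obtain ⟨t, ht⟩ := wordSet_nonempty (m := m + 1) (by omega)
      exact ⟨t ++ v, append_mem_wordSet_right ht hv, hsv.trans (suffix_append t v)⟩
    · have hs'len : s'.length < Nat.fib (m + 1) := by
        rw [length_append, length_of_mem_wordSet hv, Nat.fib_add_two (n := m + 1)] at hlen
        omega
      obtain ⟨u₁, hu₁, hs'u₁⟩ := exists_suffix_mem_wordSet_of_succ (m + 2) hu hs'u
        (hs'len.trans_le Nat.fib_le_fib_succ)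
      obtain ⟨u₀, hu₀, hs'u₀⟩ := exists_suffix_mem_wordSet_of_succ (m + 1) hu₁ hs'u₁ hs'len
      exact ⟨u₀ ++ v, append_mem_wordSet_right hu₀ hv, suffix_append_self_iff.mpr hs'u₀⟩
  | m + 3, s, _, Or.inr ⟨u, hu, v, hv, rfl⟩, hs, hlen =>
    ⟨v, hv, suffix_of_suffix_length_le hs (suffix_append u v)
      (by rw [length_of_mem_wordSet hv]; exact hlen.le)⟩

theorem exists_suffix_mem_wordSet_of_le {k m : ℕ} (hkm : k ≤ m) {s w : List Bool}
    (hw : w ∈ wordSet m) (hs : s <:+ w) (hlen : s.length < Nat.fib k) :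
    ∃ w₀ ∈ wordSet k, s <:+ w₀ := by
  induction m, hkm using Nat.le_induction generalizing w with
  | base => exact ⟨w, hw, hs⟩
  | succ m hkm ih =>
    obtain ⟨w₁, hw₁, hs₁⟩ :=
      exists_suffix_mem_wordSet_of_succ m hw hs (hlen.trans_le (Nat.fib_mono hkm))
    exact ih hw₁ hs₁

theorem exists_prefix_mem_wordSet_of_le {k m : ℕ} (hkm : k ≤ m) {p w : List Bool}
    (hw : w ∈ wordSet m) (hp : p <+: w) (hlen : p.length < Nat.fib k) :
    ∃ w₀ ∈ wordSet k, p <+: w₀ := by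
  obtain ⟨w₀, hw₀, hpw₀⟩ := exists_suffix_mem_wordSet_of_le hkm (reverse_mem_wordSet hw)
    (reverse_suffix.mpr hp) (by rwa [length_reverse])
  exact ⟨w₀.reverse, reverse_mem_wordSet hw₀, by rwa [← reverse_suffix, reverse_reverse]⟩

theorem exists_prefix_mem_wordSet_succ {m : ℕ} (hm : 2 ≤ m) {w : List Bool}
    (hw : w ∈ wordSet m) : ∃ w' ∈ wordSet (m + 1), w <+: w' := by
  obtain ⟨m, rfl⟩ := Nat.exists_eq_add_of_le' hm
  obtain ⟨t, ht⟩ := wordSet_nonempty (m := m + 1) (by omega)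
  exact ⟨w ++ t, append_mem_wordSet_left hw ht, prefix_append w t⟩

theorem List.IsSuffix.append_infix_append {α : Type*} {s u p v : List α} (hs : s <:+ u)
    (hp : p <+: v) : s ++ p <:+: u ++ v := by
  obtain ⟨a, rfl⟩ := hs
  obtain ⟨b, rfl⟩ := hp
  exact ⟨a, b, by simp⟩

theorem append_mem_factorSet_of_suffix_of_prefix {n i j : ℕ} (hn : 4 ≤ n) (hi : n ≤ i)
    (hj : n ≤ j) {u v s p : List Bool} (hu : u ∈ wordSet i) (hv : v ∈ wordSet j)
    (hs : s <:+ u) (hp : p <+: v) (hs0 : s ≠ []) (hp0 : p ≠ [])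
    (hlen : (s ++ p).length = Nat.fib n) : s ++ p ∈ factorSet (wordSet (n + 1)) (Nat.fib n) := by
  obtain ⟨k, rfl⟩ : ∃ k, n = k + 2 := ⟨n - 2, by omega⟩
  have hfib : Nat.fib (k + 2) = Nat.fib k + Nat.fib (k + 1) := Nat.fib_add_two
  have hfib_lt : Nat.fib k < Nat.fib (k + 1) := Nat.fib_lt_fib_succ (by omega)
  have hs1 := length_pos_iff.mpr hs0
  have hp1 := length_pos_iff.mpr hp0
  have hsp : s.length + p.length = Nat.fib (k + 2) := by rwa [← length_append]
  obtain ⟨u₀, v₀, huv₀, hs₀, hp₀⟩ :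
      ∃ u₀ v₀, u₀ ++ v₀ ∈ wordSet (k + 3) ∧ s <:+ u₀ ∧ p <+: v₀ := by
    by_cases hplen : p.length < Nat.fib (k + 1)
    · obtain ⟨u₀, hu₀, hs₀⟩ := exists_suffix_mem_wordSet_of_le hi hu hs (by omega)
      obtain ⟨v₀, hv₀, hp₀⟩ := exists_prefix_mem_wordSet_of_le (by omega) hv hp hplen
      exact ⟨u₀, v₀, append_mem_wordSet_left hu₀ hv₀, hs₀, hp₀⟩
    · obtain ⟨u₀, hu₀, hs₀⟩ :=
        exists_suffix_mem_wordSet_of_le (k := k + 1) (by omega) hu hs (by omega)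
      obtain ⟨v₀, hv₀, hp₀⟩ := exists_prefix_mem_wordSet_of_le hj hv hp (by omega)
      exact ⟨u₀, v₀, append_mem_wordSet_right hu₀ hv₀, hs₀, hp₀⟩
  exact ⟨hlen, u₀ ++ v₀, huv₀, hs₀.append_infix_append hp₀⟩

theorem mem_factorSet_of_infix_append {n i j : ℕ} (hn : 4 ≤ n) (hi : n ≤ i) (hj : n ≤ j)
    {u v x : List Bool} (hu : u ∈ wordSet i) (hv : v ∈ wordSet j)
    (hui : factorSet (wordSet i) (Nat.fib n) ⊆ factorSet (wordSet (n + 1)) (Nat.fib n))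
    (hvj : factorSet (wordSet j) (Nat.fib n) ⊆ factorSet (wordSet (n + 1)) (Nat.fib n))
    (hx : x.length = Nat.fib n) (hxuv : x <:+: u ++ v) :
    x ∈ factorSet (wordSet (n + 1)) (Nat.fib n) := by
  rcases infix_append_iff.mp hxuv with hxu | hxv | ⟨s, p, rfl, hs, hp⟩
  · exact hui ⟨hx, u, hu, hxu⟩
  · exact hvj ⟨hx, v, hv, hxv⟩
  rcases eq_or_ne s [] with rfl | hs0
  · exact hvj ⟨hx, v, hv, hp.isInfix⟩
  rcases eq_or_ne p [] with rfl | hp0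
  · exact hui ⟨hx, u, hu, by simpa using hs.isInfix⟩
  exact append_mem_factorSet_of_suffix_of_prefix hn hi hj hu hv hs hp hs0 hp0 hx

theorem factorSet_wordSet_subset {n : ℕ} (hn : 4 ≤ n) (m : ℕ) :
    factorSet (wordSet m) (Nat.fib n) ⊆ factorSet (wordSet (n + 1)) (Nat.fib n) := by
  induction m using Nat.strong_induction_on with
  | _ m ih =>
  rintro x ⟨hx, w, hw, hxw⟩
  have hnm : n ≤ m := by
    by_contra! hmn
    have hfib : Nat.fib m < Nat.fib n := calc
      Nat.fib m ≤ Nat.fib (n - 1) := Nat.fib_mono (by omega)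
      _ < Nat.fib (n - 1 + 1) := Nat.fib_lt_fib_succ (by omega)
      _ = Nat.fib n := by rw [Nat.sub_add_cancel (by omega)]
    have hxw_len := hxw.length_le
    rw [hx, length_of_mem_wordSet hw] at hxw_len
    omega
  obtain rfl | rfl | hm := show m = n ∨ m = n + 1 ∨ n + 2 ≤ m by omega
  · obtain ⟨w', hw', hww'⟩ := exists_prefix_mem_wordSet_succ (by omega) hw
    exact ⟨hx, w', hw', hxw.trans hww'.isInfix⟩
  · exact ⟨hx, w, hw, hxw⟩
  obtain ⟨m, rfl⟩ : ∃ m', m = m' + 3 := ⟨m - 3, by omega⟩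
  rcases hw with ⟨u, hu, v, hv, rfl⟩ | ⟨u, hu, v, hv, rfl⟩
  · exact mem_factorSet_of_infix_append hn (by omega) (by omega) hu hv (ih _ (by omega))
      (ih _ (by omega)) hx hxw
  · exact mem_factorSet_of_infix_append hn (by omega) (by omega) hu hv (ih _ (by omega))
      (ih _ (by omega)) hx hxw

theorem stmt12 (n : ℕ) (hn : 4 ≤ n) :
    Fn n = factorSet (wordSet (n + 1)) (Nat.fib n) :=
  (Set.iUnion₂_subset fun m _ => factorSet_wordSet_subset hn m).antisymm
    (Set.subset_iUnion₂ (s := fun m (_ : m ≥ 1) => factorSet (wordSet m) (Nat.fib n)) (n + 1)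
      (by omega))
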